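/- Let G be a finite group with distinct minimal normal subgroups N₁ ≅ (C_p)^a (a ≥ 3) and N₂ ≅ C_p for the same prime p. Then G has two non-conjugate core-free subgroups H₁, H₂ with H_i ∩ H_i^g ≠ 1 for all g ∈ G. -/

import Mathlib

/-- The conjugate subgroup `g⁻¹ H g`. -/
def conjSub {G : Type*} [Group G] (H : Subgroup G) (g : G) : Subgroup G :=
  H.map (MulAut.conj g).toMonoidHom

/-- `N` is a minimal normal subgroup of `G`. -/
def IsMinNormal {G : Type*} [Group G] (N : Subgroup G) : Prop :=
  N ≠ ⊥ ∧ N.Normal ∧ ∀ M : Subgroup G, M.Normal → M ≤ N → M = ⊥ ∨ M = N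

/-!
Fix a surjection `θ : N₁ → N₂` (a coordinate projection) and take `H₁ = ker θ`, of index `p` in
`N₁`, and `H₂ = {u θ(u) | u ∈ N₁}`, the graph of `θ` in `N₁ N₂ ≅ N₁ × N₂`, of order `|N₁|`.
A normal subgroup inside `H₁` is a proper normal subgroup of `N₁`, hence trivial. A normal
subgroup `M` inside `H₂` meets `N₁` and `N₂` trivially; then `(M N₂) ∩ N₁` is `1` or `N₁`, and
counting with `|N₂|² < |N₁|` gives `M = 1` in either case. The two are not conjugate since
`|H₁| < |H₂|`, and each `Hᵢ` meets all its conjugates because `|Hᵢ|²` exceeds the order of the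
normal subgroup (`N₁`, resp. `N₁ N₂`) containing them.
-/

section

variable {G : Type*} [Group G]

namespace Subgroup

theorem card_mul_card_le_of_disjoint [Finite G] {A B C : Subgroup G} (hA : A ≤ C) (hB : B ≤ C)
    (h : Disjoint A B) : Nat.card A * Nat.card B ≤ Nat.card C := by
  have hAC : Nat.card A * A.relIndex C = Nat.card C := by
    simpa only [relIndex_bot_left] using relIndex_mul_relIndex ⊥ A C bot_le hA
  have hBC : Nat.card B * B.relIndex C = Nat.card C := by
    simpa only [relIndex_bot_left] using relIndex_mul_relIndex ⊥ B C bot_le hB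
  have hC : Nat.card C ≤ A.relIndex C * B.relIndex C := by
    simpa only [h.eq_bot, relIndex_bot_left] using relIndex_inf_le (H := A) (K := B) (L := C)
  refine Nat.le_of_mul_le_mul_right ?_ (Nat.card_pos (α := C))
  calc Nat.card A * Nat.card B * Nat.card C
      ≤ Nat.card A * Nat.card B * (A.relIndex C * B.relIndex C) := Nat.mul_le_mul_left _ hC
    _ = Nat.card A * A.relIndex C * (Nat.card B * B.relIndex C) := by ring
    _ = Nat.card C * Nat.card C := by rw [hAC, hBC]

open scoped Pointwise in
theorem card_sup_le_of_normal (M N : Subgroup G) [N.Normal] :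
    Nat.card (M ⊔ N : Subgroup G) ≤ Nat.card M * Nat.card N := by
  calc Nat.card (M ⊔ N : Subgroup G) = Nat.card ((M : Set G) * (N : Set G)) := by
        rw [← mul_normal, SetLike.coe_sort_coe]
    _ ≤ Nat.card M * Nat.card N := Set.natCard_mul_le

end Subgroup

theorem card_conjSub (H : Subgroup G) (g : G) : Nat.card (conjSub H g) = Nat.card H :=
  Subgroup.card_map_of_injective (MulAut.conj g).injective

theorem conjSub_le_of_normal {H N : Subgroup G} (hN : N.Normal) (h : H ≤ N) (g : G) :
    conjSub H g ≤ N := by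
  rintro _ ⟨x, hx, rfl⟩
  exact hN.conj_mem x (h hx) g

theorem inf_conjSub_ne_bot [Finite G] {H N : Subgroup G} (hN : N.Normal) (hH : H ≤ N)
    (hcard : Nat.card N < Nat.card H ^ 2) (g : G) : H ⊓ conjSub H g ≠ ⊥ := fun h => by
  have := Subgroup.card_mul_card_le_of_disjoint hH (conjSub_le_of_normal hN hH g)
    (disjoint_iff.2 h)
  rw [card_conjSub, ← sq] at this
  omega

namespace IsMinNormal

variable {N : Subgroup G} (hN : IsMinNormal N)
include hN

theorem inf_eq_bot_of_not_le {M : Subgroup G} [M.Normal] (h : ¬ N ≤ M) : M ⊓ N = ⊥ :=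
  have := hN.2.1
  (hN.2.2 (M ⊓ N) inferInstance inf_le_right).resolve_right fun hMN => h (hMN ▸ inf_le_left)

theorem normalCore_eq_bot {H : Subgroup G} (hH : H ≤ N) (h : ¬ N ≤ H) : H.normalCore = ⊥ := by
  have hcore := hN.inf_eq_bot_of_not_le (M := H.normalCore) fun hle => h (hle.trans H.normalCore_le)
  rwa [inf_eq_left.2 (H.normalCore_le.trans hH)] at hcore

theorem disjoint_of_ne {N' : Subgroup G} (hN' : IsMinNormal N') (hne : N ≠ N') : Disjoint N N' := by
  have := hN.2.1
  refine disjoint_iff.2 (hN'.inf_eq_bot_of_not_le fun hle => ?_)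
  rcases hN.2.2 N' hN'.2.1 hle with h | h
  exacts [hN'.1 h, hne h.symm]

theorem eq_bot_of_le_sup [Finite G] {N₂ M : Subgroup G} [N₂.Normal] [M.Normal]
    (hM : M ≤ N ⊔ N₂) (hMN : Disjoint M N) (hMN₂ : Disjoint M N₂)
    (hcard : Nat.card N₂ ^ 2 < Nat.card N) : M = ⊥ := by
  have := hN.2.1
  have hsup := Subgroup.card_sup_le_of_normal N N₂
  have hMcard : Nat.card M * Nat.card N ≤ Nat.card N * Nat.card N₂ :=
    (Subgroup.card_mul_card_le_of_disjoint hM le_sup_left hMN).trans hsup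
  have hpos : 0 < Nat.card N := Nat.card_pos
  have hMN₂le : M ⊔ N₂ ≤ N ⊔ N₂ := sup_le hM le_sup_right
  rcases hN.2.2 ((M ⊔ N₂) ⊓ N) inferInstance inf_le_right with hY | hY
  · -- `M N₂` is too small to contain more than `N₂`.
    have hle := (Subgroup.card_mul_card_le_of_disjoint hMN₂le le_sup_left
      (disjoint_iff.2 hY)).trans hsup
    have hN₂eq : N₂ = M ⊔ N₂ := Subgroup.eq_of_le_of_card_ge le_sup_right (by nlinarith)
    exact hMN₂.eq_bot_of_le (hN₂eq ▸ le_sup_left)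
  · -- `N ≤ M N₂`, while `|M N₂| ≤ |M| |N₂| ≤ |N₂|²`.
    exfalso
    have hle := (Subgroup.card_le_of_le (hY ▸ inf_le_left : N ≤ M ⊔ N₂)).trans
      (Subgroup.card_sup_le_of_normal M N₂)
    nlinarith

end IsMinNormal

namespace Subgroup

variable {N₁ N₂ : Subgroup G} [N₁.Normal] [N₂.Normal] (hd : Disjoint N₁ N₂) (θ : N₁ →* N₂)

def graphHom : N₁ →* G :=
  (N₁.subtype.noncommCoprod N₂.subtype fun u v =>
    commute_of_normal_of_disjoint N₁ N₂ ‹_› ‹_› hd u v u.2 v.2).comp ((MonoidHom.id N₁).prod θ)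

theorem graphHom_apply (u : N₁) : graphHom hd θ u = u * θ u := rfl

/-- The graph of `θ`, viewed inside `N₁ N₂ ≅ N₁ × N₂`: the set of products `u θ(u)`. -/
def graph : Subgroup G := (graphHom hd θ).range

theorem graphHom_injective : Function.Injective (graphHom hd θ) := by
  refine (injective_iff_map_eq_one _).2 fun u hu => ?_
  rw [graphHom_apply, mul_eq_one_iff_eq_inv] at hu
  have hu' : (u : G) ∈ N₁ ⊓ N₂ := ⟨u.2, hu ▸ N₂.inv_mem (θ u).2⟩
  rwa [hd.eq_bot, mem_bot, OneMemClass.coe_eq_one] at hu'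

theorem card_graph : Nat.card (graph hd θ) = Nat.card N₁ :=
  (Nat.card_congr (MonoidHom.ofInjective (graphHom_injective hd θ)).toEquiv).symm

theorem graph_le_sup : graph hd θ ≤ N₁ ⊔ N₂ := by
  rintro _ ⟨u, rfl⟩
  exact mul_mem (mem_sup_left u.2) (mem_sup_right (θ u).2)

theorem disjoint_graph_right : Disjoint (graph hd θ) N₂ := by
  rw [disjoint_def]
  rintro _ ⟨u, rfl⟩ hu
  rw [graphHom_apply] at hu
  have hu' : (u : G) ∈ N₁ ⊓ N₂ := ⟨u.2, by simpa using N₂.mul_mem hu (N₂.inv_mem (θ u).2)⟩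
  rw [hd.eq_bot, mem_bot, OneMemClass.coe_eq_one] at hu'
  simp [hu']

theorem not_le_graph {u : N₁} (hu : θ u ≠ 1) : ¬ N₁ ≤ graph hd θ := by
  intro hle
  obtain ⟨v, hv⟩ := hle u.2
  rw [graphHom_apply] at hv
  -- `u = v θ(v)` forces `θ(v) = v⁻¹ u ∈ N₁ ∩ N₂`, so `θ(v) = 1` and `u = v`.
  have hθv : ((θ v : N₂) : G) ∈ N₁ ⊓ N₂ :=
    ⟨by simpa [← hv] using N₁.mul_mem (N₁.inv_mem v.2) u.2, (θ v).2⟩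
  rw [hd.eq_bot, mem_bot, OneMemClass.coe_eq_one] at hθv
  rw [hθv, OneMemClass.coe_one, mul_one, SetLike.coe_eq_coe] at hv
  exact hu (hv ▸ hθv)

end Subgroup

theorem MonoidHom.card_map_ker_mul_card {N : Subgroup G} {H : Type*} [Group H] (θ : N →* H)
    (hθ : Function.Surjective θ) : Nat.card (θ.ker.map N.subtype) * Nat.card H = Nat.card N := by
  rw [Subgroup.card_subtype, ← θ.ker.card_mul_index, Subgroup.index_ker,
    MonoidHom.range_eq_top.2 hθ, Subgroup.card_top]

theorem exists_coreFree_selfIntersecting_pair [Finite G] {N₁ N₂ : Subgroup G}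
    (hmin₁ : IsMinNormal N₁) (hmin₂ : IsMinNormal N₂) (θ : N₁ →* N₂) (hθ : Function.Surjective θ)
    (hcard : Nat.card N₂ ^ 2 < Nat.card N₁) :
    ∃ H₁ H₂ : Subgroup G,
      H₁.normalCore = ⊥ ∧ H₂.normalCore = ⊥ ∧
      (∀ g : G, conjSub H₁ g ≠ H₂) ∧
      (∀ g : G, H₁ ⊓ conjSub H₁ g ≠ ⊥) ∧
      (∀ g : G, H₂ ⊓ conjSub H₂ g ≠ ⊥) := by
  have := hmin₁.2.1
  have := hmin₂.2.1
  have hN₂ : 1 < Nat.card N₂ := N₂.one_lt_card_iff_ne_bot.2 hmin₂.1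
  have hd : Disjoint N₁ N₂ := hmin₁.disjoint_of_ne hmin₂ fun h => by rw [h] at hcard; nlinarith
  obtain ⟨u, hu⟩ : ∃ u : N₁, θ u ≠ 1 := by
    obtain ⟨v, hv⟩ := Subgroup.ne_bot_iff_exists_ne_one.1 hmin₂.1
    obtain ⟨u, rfl⟩ := hθ v
    exact ⟨u, hv⟩
  set K := θ.ker.map N₁.subtype
  set H := Subgroup.graph hd θ
  have hK : Nat.card K * Nat.card N₂ = Nat.card N₁ := θ.card_map_ker_mul_card hθ
  have hKN₁ : K ≤ N₁ := Subgroup.map_subtype_le _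
  have hK_lt : Nat.card K < Nat.card N₁ := by nlinarith [Nat.card_pos (α := K)]
  have hsup := Subgroup.card_sup_le_of_normal N₁ N₂
  refine ⟨K, H, hmin₁.normalCore_eq_bot hKN₁ fun h => (Subgroup.card_le_of_le h).not_gt hK_lt,
    hmin₁.eq_bot_of_le_sup (H.normalCore_le.trans (Subgroup.graph_le_sup hd θ)) ?_
      ((Subgroup.disjoint_graph_right hd θ).mono_left H.normalCore_le) hcard,
    fun g h => ?_, inf_conjSub_ne_bot hmin₁.2.1 hKN₁ (by nlinarith),
    inf_conjSub_ne_bot (Subgroup.sup_normal N₁ N₂) (Subgroup.graph_le_sup hd θ) ?_⟩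
  · exact disjoint_iff.2 (hmin₁.inf_eq_bot_of_not_le fun h =>
      Subgroup.not_le_graph hd θ hu (h.trans H.normalCore_le))
  · have := card_conjSub K g
    rw [h, Subgroup.card_graph] at this
    omega
  · rw [Subgroup.card_graph]
    nlinarith

end

theorem stmt_5_general {G : Type*} [Group G] [Finite G] (N₁ N₂ : Subgroup G) (p a : ℕ)
    (hp : p.Prime) (ha : 3 ≤ a)
    (hmin₁ : IsMinNormal N₁) (hmin₂ : IsMinNormal N₂)
    (hiso₁ : Nonempty (N₁ ≃* Multiplicative (Fin a → ZMod p)))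
    (hiso₂ : Nonempty (N₂ ≃* Multiplicative (ZMod p))) :
    ∃ H₁ H₂ : Subgroup G,
      H₁.normalCore = ⊥ ∧ H₂.normalCore = ⊥ ∧
      (∀ g : G, conjSub H₁ g ≠ H₂) ∧
      (∀ g : G, H₁ ⊓ conjSub H₁ g ≠ ⊥) ∧
      (∀ g : G, H₂ ⊓ conjSub H₂ g ≠ ⊥) := by
  have : NeZero p := ⟨hp.ne_zero⟩
  obtain ⟨e₁⟩ := hiso₁
  obtain ⟨e₂⟩ := hiso₂
  let i₀ : Fin a := ⟨0, by omega⟩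
  let θ : N₁ →* N₂ := e₂.symm.toMonoidHom.comp
    ((Pi.evalAddMonoidHom (fun _ => ZMod p) i₀).toMultiplicative.comp e₁.toMonoidHom)
  have hθ : Function.Surjective θ := fun v =>
    ⟨e₁.symm (Multiplicative.ofAdd fun _ => (e₂ v).toAdd), by simp [θ]⟩
  refine exists_coreFree_selfIntersecting_pair hmin₁ hmin₂ θ hθ ?_
  rw [Nat.card_congr e₁.toEquiv, Nat.card_congr e₂.toEquiv]
  simpa [← pow_mul] using Nat.pow_lt_pow_right hp.one_lt (show 2 < a by omega)

/-- If a finite group `G` has distinct minimal normal subgroups `N₁ ≅ (C_p)^a` (`a ≥ 3`)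
and `N₂ ≅ C_p` for the same prime `p`, then `G` has two non-conjugate core-free subgroups
`H₁, H₂` with `Hᵢ ∩ Hᵢ^g ≠ 1` for all `g ∈ G`. -/
theorem stmt_5 {G : Type*} [Group G] [Finite G] (N₁ N₂ : Subgroup G) (p a : ℕ)
    (hp : p.Prime) (ha : 3 ≤ a) (hne : N₁ ≠ N₂)
    (hmin₁ : IsMinNormal N₁) (hmin₂ : IsMinNormal N₂)
    (hiso₁ : Nonempty (N₁ ≃* Multiplicative (Fin a → ZMod p)))
    (hiso₂ : Nonempty (N₂ ≃* Multiplicative (ZMod p))) :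
    ∃ H₁ H₂ : Subgroup G,
      H₁.normalCore = ⊥ ∧ H₂.normalCore = ⊥ ∧
      (∀ g : G, conjSub H₁ g ≠ H₂) ∧
      (∀ g : G, H₁ ⊓ conjSub H₁ g ≠ ⊥) ∧
      (∀ g : G, H₂ ⊓ conjSub H₂ g ≠ ⊥) :=
  stmt_5_general N₁ N₂ p a hp ha hmin₁ hmin₂ hiso₁ hiso₂
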